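/- For varieties over an algebraically closed field k: (1) for morphisms g: U → V and f: V → W one has (f∘g)_* = f_*∘g_* on proChow groups, so Â_* is a covariant functor from the category of varieties with arbitrary morphisms to abelian groups; (2) if X is a complete variety, the map Â_*X → A_*X given by taking the component at the identity morphism of X is a canonical isomorphism; (3) if f: X → Y is a proper map of complete varieties, then under these isomorphisms the induced map f_*: Â_*X → Â_*Y coincides with the conventional proper pushforward f_*: A_*X → A_*Y. -/

import Mathlib

/-!
Common setup: varieties over an algebraically closed field `k`, morphisms of
varieties, complete varieties, closures, an abstract Chow theory (Chow groups
with proper pushforward), and proChow groups defined as inverse limits.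
-/

open AlgebraicGeometry CategoryTheory Limits

universe u

/-- A variety over `k`: a reduced separated scheme of finite type over `k`. -/
structure Var (k : Type u) [Field k] [IsAlgClosed k] : Type (u + 1) where
  X : Scheme.{u}
  str : X ⟶ Spec (CommRingCat.of k)
  reduced : IsReduced X
  separated : IsSeparated str
  locFT : LocallyOfFiniteType str
  qc : QuasiCompact str

variable {k : Type u} [Field k] [IsAlgClosed k]

/-- A morphism of varieties over `k`. -/
@[ext]
structure VHom (U V : Var k) : Type u where
  hom : U.X ⟶ V.X
  w : hom ≫ V.str = U.str

/-- Identity morphism of a variety. -/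
def VHom.id (U : Var k) : VHom U U := ⟨𝟙 U.X, Category.id_comp _⟩

/-- Composition of morphisms of varieties (diagrammatic order). -/
def VHom.comp {U V W : Var k} (f : VHom U V) (g : VHom V W) : VHom U W :=
  ⟨f.hom ≫ g.hom, by rw [Category.assoc, g.w, f.w]⟩

@[simp] lemma VHom.comp_hom {U V W : Var k} (f : VHom U V) (g : VHom V W) :
    (f.comp g).hom = f.hom ≫ g.hom := rfl

lemma VHom.comp_assoc {U V W Z : Var k} (f : VHom U V) (g : VHom V W)
    (h : VHom W Z) : (f.comp g).comp h = f.comp (g.comp h) := by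
  ext1; simp

/-- A variety is complete if it is proper over `k`. -/
def Var.Complete (X : Var k) : Prop := IsProper X.str

/-- A variety is nonsingular if it is smooth over `k`. -/
def Var.Nonsingular (X : Var k) : Prop := IsSmooth X.str

/-- `i : U → X` is a closure of `U`: an open immersion with dense image into a
complete variety. -/
def IsClosure {U X : Var k} (i : VHom U X) : Prop :=
  X.Complete ∧ IsOpenImmersion i.hom ∧ Dense (Set.range i.hom.base)

variable (k) in
/-- The point `Spec k`, as a variety over `k`. -/
noncomputable def ptVar : Var k where
  X := Spec (CommRingCat.of k)
  str := 𝟙 _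
  reduced := inferInstance
  separated := inferInstance
  locFT := inferInstance
  qc := inferInstance

/-- The structure morphism of a variety, as a morphism to the point. -/
def strVHom (U : Var k) : VHom U (ptVar k) := ⟨U.str, Category.comp_id _⟩

variable (k) in
lemma ptVar_complete : (ptVar k).Complete := by
  show IsProper (𝟙 _); infer_instance

/-- An abstract Chow group theory on varieties over `k`: an assignment of an
abelian group `A X` ("cycles modulo rational equivalence") to each variety,
with a functorial pushforward along proper morphisms, and with `A (pt) ≃ ℤ`. -/
structure ChowTheory (k : Type u) [Field k] [IsAlgClosed k] : Type (u + 2) where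
  A : Var k → Type (u + 1)
  instAdd : ∀ X, AddCommGroup (A X)
  push : ∀ {U V : Var k} (f : VHom U V), IsProper f.hom → (A U →+ A V)
  push_id : ∀ (U : Var k) (h : IsProper (VHom.id U).hom),
    push (VHom.id U) h = AddMonoidHom.id (A U)
  push_comp : ∀ {U V W : Var k} (f : VHom U V) (g : VHom V W)
    (hf : IsProper f.hom) (hg : IsProper g.hom) (hfg : IsProper (f.comp g).hom),
    push (f.comp g) hfg = (push g hg).comp (push f hf)
  /-- the degree isomorphism `A (Spec k) ≅ ℤ` -/
  degl : A (ptVar k) ≃+ ℤ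

attribute [instance] ChowTheory.instAdd

/-- The objects of the category `𝒰`: morphisms from `U` to complete varieties. -/
def CObj (U : Var k) : Type (u + 1) := {p : Σ X : Var k, VHom U X // p.fst.Complete}

/-- The proChow group of `U`: the inverse limit of the Chow groups `A X` over
all morphisms `i : U → X` to complete varieties, with transition maps the
proper pushforwards.  An element is a compatible family of classes. -/
def proChow (C : ChowTheory k) (U : Var k) :
    AddSubgroup (∀ o : CObj U, C.A o.1.1) where
  carrier := {α | ∀ (o o' : CObj U) (π : VHom o.1.1 o'.1.1)
    (hπ : IsProper π.hom), o.1.2.comp π = o'.1.2 → C.push π hπ (α o) = α o'}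
  add_mem' := by
    intro a b ha hb o o' π hπ hw
    simp only [Pi.add_apply, map_add, ha o o' π hπ hw, hb o o' π hπ hw]
  zero_mem' := by
    intro o o' π hπ hw
    simp
  neg_mem' := by
    intro a ha o o' π hπ hw
    simp only [Pi.neg_apply, map_neg, ha o o' π hπ hw]

/-- The component of an element of the proChow group of `U` at an object
`i : U → X` of `𝒰`. -/
def proEval (C : ChowTheory k) {U : Var k} (a : proChow C U) (X : Var k)
    (i : VHom U X) (hX : X.Complete) : C.A X :=
  a.1 ⟨⟨X, i⟩, hX⟩

/-- Pushforward on proChow groups along an arbitrary morphism of varieties. -/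
def proPush (C : ChowTheory k) {U V : Var k} (f : VHom U V) :
    proChow C U →+ proChow C V :=
  AddMonoidHom.mk'
    (fun a => ⟨fun o => a.1 ⟨⟨o.1.1, f.comp o.1.2⟩, o.2⟩, by
      intro o o' π hπ hw
      exact a.2 ⟨⟨o.1.1, f.comp o.1.2⟩, o.2⟩ ⟨⟨o'.1.1, f.comp o'.1.2⟩, o'.2⟩ π hπ
        (by rw [VHom.comp_assoc, hw])⟩)
    (by intro a b; rfl)

/-- The degree of an element of a proChow group: its component at the
structure morphism to the point, composed with `A (Spec k) ≃ ℤ`. -/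
noncomputable def pdeg (C : ChowTheory k) {U : Var k} (a : proChow C U) : ℤ :=
  C.degl (proEval C a (ptVar k) (strVHom U) (ptVar_complete k))



/-- Cancellation: if `f ≫ g` is proper and `g` is separated, then `f` is proper. -/
lemma isProper_of_comp_aux {X Y Z : Scheme.{u}} (f : X ⟶ Y) (g : Y ⟶ Z)
    [IsSeparated g] [IsProper (f ≫ g)] : IsProper f := by
  have h2 : IsProper (pullback.snd (f ≫ g) g) :=
    MorphismProperty.IsStableUnderBaseChange.of_isPullback (IsPullback.of_hasPullback _ _) inferInstance
  have hfe : f = pullback.lift (𝟙 _) f (Category.id_comp (f ≫ g)) ≫ pullback.snd (f ≫ g) g := by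
    simp only [pullback.lift_snd]
  rw [hfe]
  exact MorphismProperty.IsStableUnderComposition.comp_mem _ _
    (inferInstance : IsProper (pullback.lift (𝟙 _) f (Category.id_comp (f ≫ g)))) h2

lemma VHom.id_comp {U V : Var k} (f : VHom U V) : (VHom.id U).comp f = f := by
  ext1; simp [VHom.id, VHom.comp]

lemma VHom.comp_id {U V : Var k} (f : VHom U V) : f.comp (VHom.id V) = f := by
  ext1; simp [VHom.id, VHom.comp]

/-- If `X` is complete, any morphism to a variety is proper. -/
lemma properOfComplete {X : Var k} (hX : X.Complete) (o : CObj X) :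
    IsProper o.1.2.hom := by
  have hsep : IsSeparated o.1.1.str := o.1.1.separated
  have hcomp : IsProper (o.1.2.hom ≫ o.1.1.str) := by rw [o.1.2.w]; exact hX
  exact isProper_of_comp_aux o.1.2.hom o.1.1.str

lemma push_congr (C : ChowTheory k) {U V : Var k} {f g : VHom U V} (h : f = g)
    (hf : IsProper f.hom) (hg : IsProper g.hom) : C.push f hf = C.push g hg := by
  subst h; rfl

lemma eval_congr (C : ChowTheory k) {U : Var k} (a : ∀ o : CObj U, C.A o.1.1)
    {X : Var k} {i j : VHom U X} (h : i = j) (hX : X.Complete) :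
    a ⟨⟨X, i⟩, hX⟩ = a ⟨⟨X, j⟩, hX⟩ := by subst h; rfl

/-- (1) Pushforward of proChow groups is functorial for
arbitrary morphisms of varieties, so `Â_*` is a covariant functor to abelian
groups; (2) for a complete variety `X`, evaluation at the identity is a
canonical isomorphism `Â_*X ≅ A_*X`; (3) for a proper map `f : X → Y` of
complete varieties, the induced map `Â_*X → Â_*Y` coincides, under these
isomorphisms, with the conventional proper pushforward `A_*X → A_*Y`. -/
theorem stmt2 (k : Type u) [Field k] [IsAlgClosed k] (C : ChowTheory k) :
    -- (1) functoriality: identities and composites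
    (∀ (U : Var k), proPush C (VHom.id U) = AddMonoidHom.id (proChow C U)) ∧
    (∀ (U V W : Var k) (g : VHom U V) (f : VHom V W),
      proPush C (g.comp f) = (proPush C f).comp (proPush C g)) ∧
    -- (2) for complete `X`, evaluation at the identity is an isomorphism
    (∀ (X : Var k) (hX : X.Complete),
      Function.Bijective
        (fun a : proChow C X => proEval C a X (VHom.id X) hX)) ∧
    -- (3) compatibility with the conventional proper pushforward
    (∀ (X Y : Var k) (f : VHom X Y) (hf : IsProper f.hom)
      (hX : X.Complete) (hY : Y.Complete) (a : proChow C X),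
      proEval C (proPush C f a) Y (VHom.id Y) hY =
        C.push f hf (proEval C a X (VHom.id X) hX)) := by
  refine ⟨?_, ?_, ?_, ?_⟩
  · intro U
    ext a o
    exact eval_congr C a.1 (VHom.id_comp o.1.2) o.2
  · intro U V W g f
    ext a o
    exact eval_congr C a.1 (VHom.comp_assoc g f o.1.2) o.2
  · intro X hX
    constructor
    · intro a b hab
      refine Subtype.ext (funext fun o => ?_)
      have hi : IsProper o.1.2.hom := properOfComplete hX o
      have ha := a.2 ⟨⟨X, VHom.id X⟩, hX⟩ o o.1.2 hi (VHom.id_comp o.1.2)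
      have hb := b.2 ⟨⟨X, VHom.id X⟩, hX⟩ o o.1.2 hi (VHom.id_comp o.1.2)
      rw [← ha, ← hb]
      exact congrArg _ hab
    · intro x
      have hid : IsProper (VHom.id X).hom :=
        properOfComplete hX ⟨⟨X, VHom.id X⟩, hX⟩
      refine ⟨⟨fun o => C.push o.1.2 (properOfComplete hX o) x, ?_⟩, ?_⟩
      · intro o o' π hπ hw
        have h1 := properOfComplete hX o
        have h2 := properOfComplete hX o'
        have h3 : IsProper (o.1.2.comp π).hom := by rw [hw]; exact h2
        have := C.push_comp o.1.2 π h1 hπ h3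
        calc C.push π hπ (C.push o.1.2 h1 x)
            = C.push (o.1.2.comp π) h3 x := by rw [this]; rfl
          _ = C.push o'.1.2 h2 x := by rw [push_congr C hw h3 h2]
      · show C.push (VHom.id X) _ x = x
        rw [push_congr C rfl _ hid, C.push_id X hid]; rfl
  · intro X Y f hf hX hY a
    have h1 : proEval C (proPush C f a) Y (VHom.id Y) hY = a.1 ⟨⟨Y, f⟩, hY⟩ :=
      eval_congr C a.1 (VHom.comp_id f) hY
    have h2 := a.2 ⟨⟨X, VHom.id X⟩, hX⟩ ⟨⟨Y, f⟩, hY⟩ f hf (VHom.id_comp f)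
    rw [h1, ← h2]; rfl
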